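/- Let Ψ : ℝ → ℝ be C², Ψ = Ψ_vex + Ψ_cav with Ψ_vex convex and Ψ_cav concave, both C². Then for all a, b ∈ ℝ there exist points z₁, z₂ in the closed interval between a and b such that Ψ(b) - Ψ(a) - (Ψ'_vex(b) + Ψ'_cav(a))(b - a) = -½(Ψ''_vex(z₁) - Ψ''_cav(z₂))(b - a)², and this quantity is ≤ 0. -/

import Mathlib

open Set

private lemma iterWithin_eq' (f : ℝ → ℝ) (n : ℕ) {s : Set ℝ} {y : ℝ} (h : s =ᶠ[nhds y] Set.univ) :
    iteratedDerivWithin n f s y = iteratedDeriv n f y := by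
  rw [← iteratedDerivWithin_univ]
  simp only [iteratedDerivWithin, iteratedFDerivWithin_congr_set h]

private lemma taylor1_lt' (f : ℝ → ℝ) (hf : ContDiff ℝ 2 f) {x₀ x : ℝ} (hx : x₀ < x) :
    ∃ z ∈ Ioo x₀ x, f x - f x₀ - deriv f x₀ * (x - x₀) =
      deriv (deriv f) z * (x - x₀) ^ 2 / 2 := by
  have hf1 : ContDiffOn ℝ 1 f (Icc x₀ x) := (hf.of_le one_le_two).contDiffOn
  have hd : DifferentiableOn ℝ (iteratedDerivWithin 1 f (Icc x₀ x)) (Ioo x₀ x) := by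
    intro y hy
    have : iteratedDerivWithin 1 f (Icc x₀ x) =ᶠ[nhds y] iteratedDeriv 1 f := by
      filter_upwards [Ioo_mem_nhds hy.1 hy.2] with t ht
      exact iterWithin_eq' f 1 (Filter.eventuallyEq_univ.2 (Icc_mem_nhds ht.1 ht.2))
    have hdiff : DifferentiableAt ℝ (iteratedDeriv 1 f) y := by
      rw [iteratedDeriv_one]
      exact ((hf.iterate_deriv' 1 1).differentiable one_ne_zero).differentiableAt
    exact (hdiff.congr_of_eventuallyEq this).differentiableWithinAt
  have hlag := taylor_mean_remainder_lagrange (n := 1) hx.ne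
    (by rw [uIcc_of_le hx.le]; exact_mod_cast hf1) (by rwa [uIcc_of_le hx.le, uIoo_of_le hx.le])
  rw [uIcc_of_le hx.le, uIoo_of_le hx.le] at hlag
  obtain ⟨z, hz, hzr⟩ := hlag
  refine ⟨z, hz, ?_⟩
  have h2 : iteratedDerivWithin 2 f (Icc x₀ x) z = deriv (deriv f) z := by
    rw [iterWithin_eq' f 2 (Filter.eventuallyEq_univ.2 (Icc_mem_nhds hz.1 hz.2))]
    rw [iteratedDeriv_succ, iteratedDeriv_one]
  have ht : taylorWithinEval f 1 (Icc x₀ x) x₀ x = f x₀ + deriv f x₀ * (x - x₀) := by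
    rw [taylorWithinEval_succ, taylor_within_zero_eval]
    have : derivWithin f (Icc x₀ x) x₀ = deriv f x₀ := by
      apply DifferentiableAt.derivWithin
      · exact (hf.differentiable (by norm_num)).differentiableAt
      · exact (uniqueDiffOn_Icc hx) x₀ (left_mem_Icc.2 hx.le)
    simp [this, iteratedDerivWithin_one]
    ring
  rw [ht] at hzr
  rw [h2] at hzr
  norm_num at hzr ⊢
  linarith [hzr]

private lemma taylor1' (f : ℝ → ℝ) (hf : ContDiff ℝ 2 f) {x₀ x : ℝ} (h : x₀ ≠ x) :
    ∃ z ∈ uIcc x₀ x, f x - f x₀ - deriv f x₀ * (x - x₀) =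
      deriv (deriv f) z * (x - x₀) ^ 2 / 2 := by
  rcases lt_or_gt_of_ne h with hlt | hgt
  · obtain ⟨z, hz, hr⟩ := taylor1_lt' f hf hlt
    exact ⟨z, Icc_subset_uIcc (Ioo_subset_Icc_self hz), hr⟩
  · -- x < x₀ : apply to g t = f (-t)
    set g : ℝ → ℝ := fun t => f (-t) with hg
    have hgc : ContDiff ℝ 2 g := hf.comp (contDiff_neg)
    have hg1 : ∀ t, deriv g t = -deriv f (-t) := fun t => deriv_comp_neg f t
    have hg2 : ∀ t, deriv (deriv g) t = deriv (deriv f) (-t) := by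
      intro t
      have : deriv g = fun t => -deriv f (-t) := funext hg1
      rw [this]
      rw [show (fun t => -deriv f (-t)) = fun t => (fun s => -deriv f s) (-t) from rfl]
      rw [deriv_comp_neg (fun s => -deriv f s) t, deriv.fun_neg, neg_neg]
    obtain ⟨w, hw, hr⟩ := taylor1_lt' g hgc (show -x₀ < -x by linarith)
    refine ⟨-w, ?_, ?_⟩
    · have h1 : x < -w := by have := hw.2; linarith
      have h2 : -w < x₀ := by have := hw.1; linarith
      exact Icc_subset_uIcc' (Ioo_subset_Icc_self ⟨h1, h2⟩)
    · simp only [hg1, hg2] at hr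
      simp only [hg, neg_neg] at hr
      have e1 : (-x - -x₀) = (x₀ - x) := by ring
      rw [e1] at hr
      have e2 : (x₀ - x) ^ 2 = (x - x₀) ^ 2 := by ring
      rw [e2] at hr
      linarith [hr]

private lemma deriv_nonneg_of_monotone' {g : ℝ → ℝ} (hm : Monotone g)
    (hd : Differentiable ℝ g) (z : ℝ) : 0 ≤ deriv g z := by
  have h := (hd z).hasDerivAt
  rw [hasDerivAt_iff_tendsto_slope] at h
  have h' : Filter.Tendsto (slope g z) (nhdsWithin z (Ioi z)) (nhds (deriv g z)) :=
    h.mono_left (nhdsWithin_mono z (fun y hy => ne_of_gt hy))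
  refine ge_of_tendsto h' ?_
  filter_upwards [self_mem_nhdsWithin] with y hy
  rw [slope_def_field]
  have hzy : z < y := hy
  exact div_nonneg (sub_nonneg.2 (hm hzy.le)) (sub_nonneg.2 hzy.le)

/-- Taylor-expansion identity quantifying the numerical dissipation
of the convex–concave splitting. -/
theorem stmt_5 (Ψ Ψvex Ψcav : ℝ → ℝ)
    (hΨ : ContDiff ℝ 2 Ψ) (hvexC : ContDiff ℝ 2 Ψvex) (hcavC : ContDiff ℝ 2 Ψcav)
    (hsplit : ∀ x, Ψ x = Ψvex x + Ψcav x)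
    (hvex : ConvexOn ℝ Set.univ Ψvex) (hcav : ConcaveOn ℝ Set.univ Ψcav) :
    ∀ a b : ℝ, ∃ z₁ ∈ Set.uIcc a b, ∃ z₂ ∈ Set.uIcc a b,
      Ψ b - Ψ a - (deriv Ψvex b + deriv Ψcav a) * (b - a) =
        -(1 / 2) * (deriv (deriv Ψvex) z₁ - deriv (deriv Ψcav) z₂) * (b - a) ^ 2 ∧
      Ψ b - Ψ a - (deriv Ψvex b + deriv Ψcav a) * (b - a) ≤ 0 := by
  -- second derivative signs
  have hvdiff : Differentiable ℝ (deriv Ψvex) :=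
    (hvexC.iterate_deriv' 1 1).differentiable one_ne_zero
  have hcdiff : Differentiable ℝ (deriv Ψcav) :=
    (hcavC.iterate_deriv' 1 1).differentiable one_ne_zero
  have hvmono : Monotone (deriv Ψvex) := by
    have := hvex.monotoneOn_deriv (fun x _ =>
      (hvexC.differentiable two_ne_zero).differentiableAt)
    intro s t hst
    exact this (mem_univ s) (mem_univ t) hst
  have hv2 : ∀ z, 0 ≤ deriv (deriv Ψvex) z :=
    deriv_nonneg_of_monotone' hvmono hvdiff
  have hcanti : Monotone (fun t => -deriv Ψcav t) := by
    have hconv : ConvexOn ℝ Set.univ (fun t => -Ψcav t) := hcav.neg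
    have := hconv.monotoneOn_deriv (fun x _ =>
      ((hcavC.differentiable two_ne_zero).neg).differentiableAt)
    intro s t hst
    have h := this (mem_univ s) (mem_univ t) hst
    simpa [deriv.fun_neg] using h
  have hc2 : ∀ z, deriv (deriv Ψcav) z ≤ 0 := by
    intro z
    have hd : Differentiable ℝ (fun t => -deriv Ψcav t) := hcdiff.neg
    have := deriv_nonneg_of_monotone' hcanti hd z
    have he : deriv (fun t => -deriv Ψcav t) z = -deriv (deriv Ψcav) z := deriv.fun_neg
    rw [he] at this
    linarith
  intro a b
  by_cases hab : a = b
  · refine ⟨a, left_mem_uIcc, a, left_mem_uIcc, ?_, ?_⟩ <;> subst hab <;> ring_nf <;> simp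
  · obtain ⟨z₁, hz₁, h₁⟩ := taylor1' Ψvex hvexC (show b ≠ a from fun h => hab h.symm)
    obtain ⟨z₂, hz₂, h₂⟩ := taylor1' Ψcav hcavC hab
    rw [uIcc_comm] at hz₁
    refine ⟨z₁, hz₁, z₂, hz₂, ?_, ?_⟩
    · have hs1 := hsplit a
      have hs2 := hsplit b
      have e : (a - b) ^ 2 = (b - a) ^ 2 := by ring
      rw [e] at h₁
      nlinarith [h₁, h₂]
    · have hs1 := hsplit a
      have hs2 := hsplit b
      have e : (a - b) ^ 2 = (b - a) ^ 2 := by ring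
      rw [e] at h₁
      nlinarith [h₁, h₂, hv2 z₁, hc2 z₂, sq_nonneg (b - a)]
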